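/- Let X be a random variable on feature space 𝒳 and Y a random variable on a finite label space 𝒴 with |𝒴| = C. Let U be uniform on 𝒴 and Z be Bernoulli(ρ) for ρ ∈ [0,1], with U and Z independent of (X,Y) and of each other. Define Y_ρ = Z·U + (1−Z)·Y (i.e., Y_ρ = U if Z = 1 and Y_ρ = Y if Z = 0). Then the Bayes error rates satisfy R*_{X,Y_ρ} = R*_{X,Y} + ρ(1 − 1/C − R*_{X,Y}). -/

import Mathlib

/-! Flipping the label maps each conditional distribution `p` to the mixture
`(1 - ρ) p + ρ / C`. An affine map with nonnegative slope commutes with taking the maximum,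
so the pointwise error `1 - max_y p(y|x)` is mapped affinely as well, and integrating this
identity over `x` gives the formula. -/

open MeasureTheory Finset

/-- The Bayes error rate of a distribution `μ` over the feature space with
conditional label probabilities `η x y = p(y|x)`:
`R* = E_X[1 - max_y p(y|x)]`. -/
noncomputable def bayesError {𝒳 : Type*} [MeasurableSpace 𝒳] (μ : Measure 𝒳)
    {𝒴 : Type*} [Fintype 𝒴] [Nonempty 𝒴] (η : 𝒳 → 𝒴 → ℝ) : ℝ :=
  ∫ x, (1 - Finset.univ.sup' Finset.univ_nonempty (fun y => η x y)) ∂μ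

theorem Finset.sup'_const_mul_add {R ι : Type*} [Semiring R] [LinearOrder R] [IsOrderedRing R]
    {s : Finset ι} (hs : s.Nonempty) (f : ι → R) {c : R} (hc : 0 ≤ c) (d : R) :
    s.sup' hs (fun i => c * f i + d) = c * s.sup' hs f + d :=
  (apply_sup'_eq_sup'_comp hs (fun t => c * t + d) fun a b =>
    ((monotone_id.const_mul hc).add_const d).map_sup a b).symm

theorem one_sub_sup'_mix_uniform {𝒴 : Type*} [Fintype 𝒴] [Nonempty 𝒴] (p : 𝒴 → ℝ)
    {ρ : ℝ} (hρ : ρ ≤ 1) :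
    1 - univ.sup' univ_nonempty (fun y => (1 - ρ) * p y + ρ / Fintype.card 𝒴)
      = (1 - ρ) * (1 - univ.sup' univ_nonempty p) + ρ * (1 - 1 / Fintype.card 𝒴) := by
  rw [univ.sup'_const_mul_add univ_nonempty p (sub_nonneg.mpr hρ)]
  ring

theorem label_flipping_bayes_error_general
    {𝒳 : Type*} [MeasurableSpace 𝒳] (μ : Measure 𝒳) [IsProbabilityMeasure μ]
    {𝒴 : Type*} [Fintype 𝒴] [Nonempty 𝒴] (η : 𝒳 → 𝒴 → ℝ)
    (hInt : Integrable (fun x => Finset.univ.sup' Finset.univ_nonempty (fun y => η x y)) μ)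
    (ρ : ℝ) (hρ : ρ ∈ Set.Icc (0:ℝ) 1) :
    bayesError μ (fun x y => (1 - ρ) * η x y + ρ / Fintype.card 𝒴)
      = bayesError μ η + ρ * (1 - 1 / Fintype.card 𝒴 - bayesError μ η) := by
  have hErrInt : Integrable (fun x => 1 - univ.sup' univ_nonempty (η x)) μ :=
    (integrable_const 1).sub hInt
  unfold bayesError
  simp_rw [one_sub_sup'_mix_uniform _ hρ.2]
  rw [integral_add (hErrInt.const_mul _) (integrable_const _), integral_const_mul,
    integral_const, probReal_univ, one_smul]
  ring

/-- Label-flipping lemma: replacing the label by an independent uniform label with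
probability `ρ` changes the conditional probabilities to `(1-ρ) p(y|x) + ρ/C`, and
the Bayes error becomes `R* + ρ (1 - 1/C - R*)`. -/
theorem label_flipping_bayes_error
    {𝒳 : Type*} [MeasurableSpace 𝒳] (μ : Measure 𝒳) [IsProbabilityMeasure μ]
    {𝒴 : Type*} [Fintype 𝒴] [Nonempty 𝒴] (η : 𝒳 → 𝒴 → ℝ)
    (hη0 : ∀ x y, 0 ≤ η x y) (hη1 : ∀ x, ∑ y : 𝒴, η x y = 1)
    (hInt : Integrable (fun x => Finset.univ.sup' Finset.univ_nonempty (fun y => η x y)) μ)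
    (ρ : ℝ) (hρ : ρ ∈ Set.Icc (0:ℝ) 1) :
    bayesError μ (fun x y => (1 - ρ) * η x y + ρ / Fintype.card 𝒴)
      = bayesError μ η + ρ * (1 - 1 / Fintype.card 𝒴 - bayesError μ η) :=
  label_flipping_bayes_error_general μ η hInt ρ hρ
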